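/- Fix T ∈ ℝ^{(m·n)×(m·n)}, λ > 0, μ ≥ 0 and a tuple B = (B_1,…,B_k) of n×n matrices. Then the function A ↦ F_{λ,μ}(A,B) has a unique global minimizer: there exists exactly one A* ∈ (ℝ^{m×m})^k such that F_{λ,μ}(A*,B) ≤ F_{λ,μ}(A,B) for all A ∈ (ℝ^{m×m})^k. -/

import Mathlib

open Matrix Kronecker

/-- Spectral norm (ℓ²→ℓ² operator norm) of a real matrix. -/
noncomputable def specNorm {p q : Type*} [Fintype p] [Fintype q] [DecidableEq q]
    (S : Matrix p q ℝ) : ℝ :=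
  ‖LinearMap.toContinuousLinearMap (Matrix.toEuclideanLin S)‖

/-- Frobenius norm of a real matrix. -/
noncomputable def frobNorm {p q : Type*} [Fintype p] [Fintype q] (S : Matrix p q ℝ) : ℝ :=
  Real.sqrt (∑ i, ∑ j, (S i j) ^ 2)

/-- The regularized cost function
`F_{λ,μ}(A,B) = ‖T − ∑ⱼ Aⱼ ⊗ Bⱼ‖₂ + λ ∑ⱼ ‖Aⱼ‖_F² + μ ∑ⱼ ‖Bⱼ‖_F²`. -/
noncomputable def F (m n k : ℕ) (T : Matrix (Fin m × Fin n) (Fin m × Fin n) ℝ)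
    (lam mu : ℝ) (A : Fin k → Matrix (Fin m) (Fin m) ℝ)
    (B : Fin k → Matrix (Fin n) (Fin n) ℝ) : ℝ :=
  specNorm (T - ∑ j, (A j) ⊗ₖ (B j)) + lam * ∑ j, frobNorm (A j) ^ 2
    + mu * ∑ j, frobNorm (B j) ^ 2


/-! For fixed `B`, `A ↦ ∑ⱼ Aⱼ ⊗ Bⱼ` is linear, so the residual `‖T − ∑ⱼ Aⱼ ⊗ Bⱼ‖₂` is a convex
function of `A`, while `λ ∑ⱼ ‖Aⱼ‖_F²` is a strictly convex, coercive sum of squares of the entries.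
Hence `A ↦ F_{λ,μ}(A,B)` is continuous and coercive, so it attains its minimum, and strictly
convex, so the minimizer is unique. -/

open Set Filter

theorem StrictConvexOn.const_mul {𝕜 E : Type*} [Field 𝕜] [LinearOrder 𝕜] [IsStrictOrderedRing 𝕜]
    [AddCommMonoid E] [SMul 𝕜 E] {s : Set E} {f : E → 𝕜} (hf : StrictConvexOn 𝕜 s f) {c : 𝕜}
    (hc : 0 < c) : StrictConvexOn 𝕜 s fun x => c * f x := by
  refine ⟨hf.1, fun x hx y hy hxy a b ha hb hab => ?_⟩
  calc c * f (a • x + b • y) < c * (a • f x + b • f y) :=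
        mul_lt_mul_of_pos_left (hf.2 hx hy hxy ha hb hab) hc
    _ = a • (c * f x) + b • (c * f y) := by simp only [smul_eq_mul]; ring

section SeparableSum

variable {ι : Type*} [Fintype ι] {E : ι → Type*}

theorem strictConvexOn_univ_sum_apply {𝕜 β : Type*} [Field 𝕜] [LinearOrder 𝕜]
    [IsStrictOrderedRing 𝕜] [∀ i, AddCommMonoid (E i)] [∀ i, Module 𝕜 (E i)]
    [AddCommMonoid β] [PartialOrder β] [IsOrderedCancelAddMonoid β] [Module 𝕜 β]
    {f : ∀ i, E i → β} (hf : ∀ i, StrictConvexOn 𝕜 univ (f i)) :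
    StrictConvexOn 𝕜 univ fun x : ∀ i, E i => ∑ i, f i (x i) := by
  refine ⟨convex_univ, fun x _ y _ hxy a b ha hb hab => ?_⟩
  obtain ⟨i₀, hi₀⟩ := Function.ne_iff.1 hxy
  simp only [Finset.smul_sum, ← Finset.sum_add_distrib, Pi.add_apply, Pi.smul_apply]
  exact Finset.sum_lt_sum (fun i _ => (hf i).convexOn.2 trivial trivial ha.le hb.le hab)
    ⟨i₀, Finset.mem_univ _, (hf i₀).2 trivial trivial hi₀ ha hb hab⟩

theorem tendsto_sum_apply_cocompact_atTop {β : Type*} [∀ i, TopologicalSpace (E i)]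
    [AddCommMonoid β] [PartialOrder β] [IsOrderedAddMonoid β] {f : ∀ i, E i → β}
    (hf₀ : ∀ i x, 0 ≤ f i x) (hf : ∀ i, Tendsto (f i) (cocompact (E i)) atTop) :
    Tendsto (fun x : ∀ i, E i => ∑ i, f i (x i)) (cocompact (∀ i, E i)) atTop := by
  rw [← coprodᵢ_cocompact, Filter.coprodᵢ, tendsto_iSup]
  refine fun i => tendsto_atTop_mono (fun x => ?_) ((hf i).comp tendsto_comap)
  exact Finset.single_le_sum (fun j _ => hf₀ j (x j)) (Finset.mem_univ i)

end SeparableSum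

theorem tendsto_sq_cocompact_atTop : Tendsto (fun x : ℝ => x ^ 2) (cocompact ℝ) atTop := by
  simpa only [Function.comp_def, Real.norm_eq_abs, sq_abs] using
    (tendsto_pow_atTop two_ne_zero).comp (tendsto_norm_cocompact_atTop (E := ℝ))

section SumSq

variable {ι : Type*} [Fintype ι]

theorem strictConvexOn_univ_sum_sq : StrictConvexOn ℝ univ fun x : ι → ℝ => ∑ i, x i ^ 2 :=
  strictConvexOn_univ_sum_apply (f := fun _ x => x ^ 2) fun _ =>
    Even.strictConvexOn_pow even_two two_ne_zero

theorem tendsto_sum_sq_cocompact_atTop :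
    Tendsto (fun x : ι → ℝ => ∑ i, x i ^ 2) (cocompact (ι → ℝ)) atTop :=
  tendsto_sum_apply_cocompact_atTop (f := fun _ x => x ^ 2) (fun _ _ => sq_nonneg _) fun _ =>
    tendsto_sq_cocompact_atTop

end SumSq

section Frobenius

variable {p q : Type*} [Fintype p] [Fintype q]

theorem frobNorm_sq (S : Matrix p q ℝ) : frobNorm S ^ 2 = ∑ i, ∑ j, S i j ^ 2 :=
  Real.sq_sqrt (by positivity)

theorem strictConvexOn_univ_frobNorm_sq :
    StrictConvexOn ℝ univ fun S : Matrix p q ℝ => frobNorm S ^ 2 := by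
  simp only [frobNorm_sq]
  exact strictConvexOn_univ_sum_apply (E := fun _ => q → ℝ) (f := fun _ r => ∑ j, r j ^ 2)
    fun _ => strictConvexOn_univ_sum_sq

theorem tendsto_frobNorm_sq_cocompact_atTop :
    Tendsto (fun S : Matrix p q ℝ => frobNorm S ^ 2) (cocompact (Matrix p q ℝ)) atTop := by
  simp only [frobNorm_sq]
  exact tendsto_sum_apply_cocompact_atTop (E := fun _ => q → ℝ) (f := fun _ r => ∑ j, r j ^ 2)
    (fun _ _ => Finset.sum_nonneg fun _ _ => sq_nonneg _) fun _ => tendsto_sum_sq_cocompact_atTop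

theorem continuous_frobNorm : Continuous (frobNorm : Matrix p q ℝ → ℝ) := by
  unfold frobNorm
  fun_prop

end Frobenius

section Spectral

variable {p : Type*} [Fintype p] [DecidableEq p]

-- `specNorm S` is definitionally `‖toEuclideanCLM S‖`, which the proofs below rely on.
theorem specNorm_nonneg (S : Matrix p p ℝ) : 0 ≤ specNorm S :=
  norm_nonneg _

theorem convexOn_univ_specNorm : ConvexOn ℝ univ (specNorm : Matrix p p ℝ → ℝ) :=
  convexOn_univ_norm.comp_linearMap (toEuclideanCLM (𝕜 := ℝ) (n := p)).toAlgEquiv.toLinearMap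

theorem continuous_specNorm : Continuous (specNorm : Matrix p p ℝ → ℝ) :=
  continuous_norm.comp (LinearMap.continuous_of_finiteDimensional
    (toEuclideanCLM (𝕜 := ℝ) (n := p)).toAlgEquiv.toLinearMap)

end Spectral

section Residual

variable {p E : Type*} [Fintype p] [DecidableEq p] [AddCommGroup E] [Module ℝ E]

theorem convexOn_univ_specNorm_sub (T : Matrix p p ℝ) (L : E →ₗ[ℝ] Matrix p p ℝ) :
    ConvexOn ℝ univ fun x => specNorm (T - L x) :=
  convexOn_univ_specNorm.comp_affineMap (AffineMap.const ℝ E T - L.toAffineMap)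

theorem continuous_specNorm_sub [TopologicalSpace E] [IsTopologicalAddGroup E]
    [ContinuousSMul ℝ E] [T2Space E] [FiniteDimensional ℝ E] (T : Matrix p p ℝ)
    (L : E →ₗ[ℝ] Matrix p p ℝ) : Continuous fun x => specNorm (T - L x) :=
  continuous_specNorm.comp (continuous_const.sub L.continuous_of_finiteDimensional)

end Residual

def kroneckerSumRight {ι l m n o R : Type*} [Fintype ι] [CommSemiring R]
    (B : ι → Matrix n o R) : (ι → Matrix l m R) →ₗ[R] Matrix (l × n) (m × o) R where
  toFun A := ∑ j, A j ⊗ₖ B j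
  map_add' A A' := by simp only [Pi.add_apply, add_kronecker, Finset.sum_add_distrib]
  map_smul' c A := by simp only [Pi.smul_apply, smul_kronecker, Finset.smul_sum, RingHom.id_apply]

theorem F_unique_minimizer_in_A_general (m n k : ℕ)
    (T : Matrix (Fin m × Fin n) (Fin m × Fin n) ℝ)
    (lam mu : ℝ) (hlam : 0 < lam)
    (B : Fin k → Matrix (Fin n) (Fin n) ℝ) :
    ∃! Astar : Fin k → Matrix (Fin m) (Fin m) ℝ,
      ∀ A : Fin k → Matrix (Fin m) (Fin m) ℝ,
        F m n k T lam mu Astar B ≤ F m n k T lam mu A B := by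
  have hconvex : StrictConvexOn ℝ univ fun A => F m n k T lam mu A B :=
    ((convexOn_univ_specNorm_sub T (kroneckerSumRight B)).add_strictConvexOn
      ((strictConvexOn_univ_sum_apply fun _ => strictConvexOn_univ_frobNorm_sq).const_mul
        hlam)).add_const _
  have hcont : Continuous fun A => F m n k T lam mu A B :=
    ((continuous_specNorm_sub T (kroneckerSumRight B)).add <| continuous_const.mul <|
      continuous_finsetSum _ fun j _ => (continuous_frobNorm.comp (continuous_apply j)).pow 2).add
        continuous_const
  have hcoercive : Tendsto (fun A => F m n k T lam mu A B) (cocompact _) atTop := by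
    refine tendsto_atTop_mono (fun A => ?_) <|
      tendsto_atTop_add_const_right _ (mu * ∑ j, frobNorm (B j) ^ 2) <|
        (tendsto_sum_apply_cocompact_atTop (fun _ _ => sq_nonneg _) fun _ =>
          tendsto_frobNorm_sq_cocompact_atTop).const_mul_atTop hlam
    exact add_le_add_left (le_add_of_nonneg_left (specNorm_nonneg (T - kroneckerSumRight B A))) _
  obtain ⟨Astar, hmin⟩ := hcont.exists_forall_le hcoercive
  exact ⟨Astar, hmin, fun A hA => hconvex.eq_of_isMinOn (isMinOn_univ_iff.2 hA)
    (isMinOn_univ_iff.2 hmin) trivial trivial⟩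

/-- For `λ > 0` and fixed `B`, the function `A ↦ F_{λ,μ}(A,B)` has a unique
global minimizer. -/
theorem F_unique_minimizer_in_A (m n k : ℕ) (hm : 0 < m) (hn : 0 < n) (hk : 0 < k)
    (T : Matrix (Fin m × Fin n) (Fin m × Fin n) ℝ)
    (lam mu : ℝ) (hlam : 0 < lam) (hmu : 0 ≤ mu)
    (B : Fin k → Matrix (Fin n) (Fin n) ℝ) :
    ∃! Astar : Fin k → Matrix (Fin m) (Fin m) ℝ,
      ∀ A : Fin k → Matrix (Fin m) (Fin m) ℝ,
        F m n k T lam mu Astar B ≤ F m n k T lam mu A B :=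
  F_unique_minimizer_in_A_general m n k T lam mu hlam B
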